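/- arXiv:2304.08473 — 4 statements merged into one kernel-verified Lean document; each statement's English description precedes it below -/
import Mathlib

section
/- Let R be a finite commutative principal ideal ring and F a free submodule of R^n of rank r. Then there exists a matrix Z ∈ R^{n×(n−r)} whose columns are linearly independent over R, such that for all y ∈ R^n, y ∈ F if and only if y·Z = 0. -/
/-!
Over an Artinian ring a vector with trivial annihilator is unimodular: otherwise its coordinates
generate an ideal of zero divisors, and such an ideal is killed by a nonzero element. Hence the
first vector of a basis of `F` is sent to `1` by a functional `φ`; projecting the other basis
vectors to `ker φ` and inducting yields a dual family for the basis, so `F` is a direct summand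
of `R^n`. Its complement is finite projective of rank `n - r` at every maximal ideal, hence free
over the semilocal ring `R`, and the projection onto it is a surjection `R^n → R^(n-r)` with
kernel `F`; `Z` is the transpose of its matrix.
-/

open Module

section

variable {R : Type*} [CommRing R]

theorem IsArtinianRing.span_range_eq_top_of_smul_left_injective [IsArtinianRing R] {ι : Type*}
    {v : ι → R} (hv : Function.Injective fun c : R ↦ c • v) : Ideal.span (Set.range v) = ⊤ := by
  by_contra hI
  have hdisj : Disjoint (Ideal.span (Set.range v) : Set R) (nonZeroDivisors R) :=
    Set.disjoint_left.mpr fun a ha hreg ↦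
      hI (Ideal.eq_top_of_isUnit_mem _ ha (isUnit_of_mem_nonZeroDivisors hreg))
  obtain ⟨s, hs, hs0⟩ :=
    SetLike.exists_of_lt (Ideal.bot_lt_annihilator_of_disjoint_nonZeroDivisors hdisj)
  refine hs0 (hv (funext fun i ↦ ?_))
  simpa [mul_comm] using Module.mem_annihilator.mp hs ⟨v i, Ideal.subset_span ⟨i, rfl⟩⟩

theorem IsArtinianRing.exists_linearMap_apply_eq_one [IsArtinianRing R] {ι : Type*} [Fintype ι]
    {v : ι → R} (hv : Function.Injective fun c : R ↦ c • v) :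
    ∃ φ : (ι → R) →ₗ[R] R, φ v = 1 := by
  obtain ⟨c, hc⟩ := (Submodule.mem_span_range_iff_exists_fun R).mp
    ((span_range_eq_top_of_smul_left_injective hv).symm ▸ Submodule.mem_top (x := (1 : R)))
  exact ⟨∑ i, c i • LinearMap.proj i, by simpa using hc⟩

theorem LinearIndependent.exists_linearMap_apply_eq_single {M : Type*} [AddCommGroup M]
    [Module R M]
    (hM : ∀ v : M, Function.Injective (fun c : R ↦ c • v) → ∃ φ : M →ₗ[R] R, φ v = 1) :
    ∀ {r : ℕ} {w : Fin r → M}, LinearIndependent R w →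
      ∃ d : M →ₗ[R] Fin r → R, ∀ i, d (w i) = Pi.single i 1
  | 0, _, _ => ⟨0, fun i ↦ i.elim0⟩
  | r + 1, w, hw => by
    obtain ⟨φ, hφ⟩ := hM (w 0) (hw.smul_left_injective 0)
    set p : M →ₗ[R] M := LinearMap.id - φ.smulRight (w 0) with hp
    have hker : LinearMap.ker p ≤ Submodule.span R {w 0} := fun m hm ↦
      Submodule.mem_span_singleton.mpr ⟨φ m, (sub_eq_zero.mp hm).symm⟩
    have htail : LinearIndependent R (p ∘ (w ∘ Fin.succ)) := by
      refine (hw.comp _ (Fin.succ_injective _)).map ((Disjoint.mono_right hker) ?_)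
      simpa [Set.range_comp, Set.image_singleton] using
        hw.disjoint_span_image (s := Set.range Fin.succ) (t := {0}) (by simp)
    obtain ⟨d, hd⟩ := exists_linearMap_apply_eq_single hM htail
    set s : (Fin r → R) →ₗ[R] M := Fintype.linearCombination R (w ∘ Fin.succ)
    -- on `span (range w)`, `m - s (d (p m))` is the `w 0`-component of `m`
    refine ⟨(φ ∘ₗ (LinearMap.id - s ∘ₗ d ∘ₗ p)).vecCons (d ∘ₗ p), fun i ↦ ?_⟩
    have hp0 : p (w 0) = 0 := by simp [hp, hφ]
    cases i using Fin.cases with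
    | zero =>
      ext k
      cases k using Fin.cases <;> simp [hp0, hφ]
    | succ j =>
      have hdj : d (p (w j.succ)) = Pi.single j 1 := hd j
      ext k
      cases k using Fin.cases <;> simp [hdj, s, Pi.single_apply]

theorem Submodule.exists_isCompl_of_basis [IsArtinianRing R] {ι : Type*} [Fintype ι] {r : ℕ}
    {F : Submodule R (ι → R)} (b : Basis (Fin r) R F) : ∃ C, IsCompl F C := by
  obtain ⟨d, hd⟩ := LinearIndependent.exists_linearMap_apply_eq_single
    (fun _ hv ↦ IsArtinianRing.exists_linearMap_apply_eq_one hv)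
    (b.linearIndependent.map' F.subtype F.ker_subtype)
  have hproj : (b.equivFun.symm.toLinearMap ∘ₗ d) ∘ₗ F.subtype = LinearMap.id :=
    b.ext fun i ↦ by simpa using congrArg b.equivFun.symm (hd i)
  exact ⟨_, LinearMap.isCompl_of_proj (f := b.equivFun.symm.toLinearMap ∘ₗ d)
    (LinearMap.congr_fun hproj)⟩

theorem Submodule.nonempty_basis_of_isCompl [Finite (MaximalSpectrum R)] {M : Type*}
    [AddCommGroup M] [Module R M] {n r : ℕ} {F C : Submodule R M} (h : IsCompl F C)
    (bM : Basis (Fin n) R M) (bF : Basis (Fin r) R F) :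
    Nonempty (Basis (Fin (n - r)) R C) := by
  have : Module.Finite R M := .of_basis bM
  have : Module.Free R M := .of_basis bM
  have : Module.Finite R F := .of_basis bF
  have : Module.Finite R C := .of_surjective _ (C.projectionOnto_surjective h.symm)
  have : Module.Projective R C :=
    .of_split C.subtype (C.projectionOnto F h.symm) (C.projectionOnto_comp_subtype h.symm)
  refine nonempty_basis_of_flat_of_finrank_eq R C (n - r) fun P ↦ ?_
  let := Ideal.Quotient.field P.1
  have hsplit := ((F.prodEquivOfIsCompl C h).symm.baseChange R (R ⧸ P.1) _ _).trans
    (TensorProduct.prodRight R (R ⧸ P.1) (R ⧸ P.1) F C) |>.finrank_eq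
  rw [finrank_prod, finrank_eq_card_basis (bM.baseChange (R ⧸ P.1)),
    finrank_eq_card_basis (bF.baseChange (R ⧸ P.1))] at hsplit
  simp only [Fintype.card_fin] at hsplit
  omega

theorem Submodule.exists_surjective_ker_eq_of_basis [IsArtinianRing R] {n r : ℕ}
    {F : Submodule R (Fin n → R)} (b : Basis (Fin r) R F) :
    ∃ g : (Fin n → R) →ₗ[R] Fin (n - r) → R, Function.Surjective g ∧ LinearMap.ker g = F := by
  obtain ⟨C, h⟩ := exists_isCompl_of_basis b
  obtain ⟨c⟩ := nonempty_basis_of_isCompl h (Pi.basisFun R (Fin n)) b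
  refine ⟨c.equivFun ∘ₗ C.projectionOnto F h.symm,
    c.equivFun.surjective.comp (C.projectionOnto_surjective h.symm), ?_⟩
  rw [LinearEquiv.ker_comp, ker_projectionOnto]

theorem Matrix.linearIndependent_row_of_surjective_mulVec {m n : Type*} [Fintype m] [Fintype n]
    [DecidableEq m] {A : Matrix m n R} (hA : Function.Surjective A.mulVec) :
    LinearIndependent R A.row := by
  obtain ⟨B, hAB⟩ := mulVec_surjective_iff_exists_right_inverse.mp hA
  rw [← vecMul_injective_iff]
  exact Function.LeftInverse.injective (g := fun x ↦ vecMul x B) fun x ↦ by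
    simp [vecMul_vecMul, hAB]

end

theorem stmt7_general (R : Type*) [CommRing R] [Fintype R]
    (n r : ℕ) (F : Submodule R (Fin n → R))
    (hF : Nonempty (Module.Basis (Fin r) R F)) :
    ∃ Z : Matrix (Fin n) (Fin (n - r)) R,
      LinearIndependent R Z.transpose ∧
      ∀ y : Fin n → R, y ∈ F ↔ Matrix.vecMul y Z = 0 := by
  obtain ⟨b⟩ := hF
  obtain ⟨g, hg, hker⟩ := F.exists_surjective_ker_eq_of_basis b
  refine ⟨(LinearMap.toMatrix' g).transpose, ?_, fun y ↦ ?_⟩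
  · rw [Matrix.transpose_transpose]
    exact Matrix.linearIndependent_row_of_surjective_mulVec fun z ↦
      (hg z).imp fun y hy ↦ by rwa [LinearMap.toMatrix'_mulVec]
  · rw [Matrix.vecMul_transpose, LinearMap.toMatrix'_mulVec, ← LinearMap.mem_ker, hker]

/-- A free rank-`r` submodule of `R^n` over a finite commutative principal ideal
ring is the kernel of right multiplication by an `n × (n-r)` matrix with linearly
independent columns. -/
theorem stmt7 (R : Type*) [CommRing R] [Fintype R] [IsPrincipalIdealRing R]
    (n r : ℕ) (hr : r ≤ n) (F : Submodule R (Fin n → R))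
    (hF : Nonempty (Module.Basis (Fin r) R F)) :
    ∃ Z : Matrix (Fin n) (Fin (n - r)) R,
      LinearIndependent R Z.transpose ∧
      ∀ y : Fin n → R, y ∈ F ↔ Matrix.vecMul y Z = 0 :=
  stmt7_general R n r F hF
end

section
/- Let R be a finite commutative chain ring and Z ∈ R^{n×(n−r)} a matrix whose columns are linearly independent over R. Then there exist an n×n permutation matrix P, an invertible matrix Q ∈ R^{(n−r)×(n−r)}, and a matrix Z' ∈ R^{r×(n−r)} such that Z = P · [I_{n−r} ; Z'] · Q, where [I_{n−r}; Z'] is the block matrix stacking the identity I_{n−r} on top of Z'. -/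
/-!
A finite local ring is Artinian, so its maximal ideal is nilpotent and therefore has a nonzero
annihilator `s`. If `∑ cⱼ zⱼ` vanishes modulo the maximal ideal, then `∑ (s cⱼ) zⱼ = 0`, so every
`s cⱼ` vanishes and no `cⱼ` is a unit: the columns of `Z` stay independent over the residue field.
There `Z` has a nonsingular maximal square submatrix `A`, which is invertible over `R` because the
residue map is local. Permuting the rows of `A` to the top and multiplying by `A⁻¹` on the right
gives `[I; Z']`.
-/

open Matrix IsLocalRing

theorem Ideal.exists_ne_zero_forall_mul_eq_zero_of_isNilpotent {R : Type*} [CommRing R]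
    [Nontrivial R] {I : Ideal R} (hI : IsNilpotent I) :
    ∃ s : R, s ≠ 0 ∧ ∀ x ∈ I, s * x = 0 := by
  classical
  have hk := Nat.find_spec hI
  obtain ⟨k, hk_eq⟩ : ∃ k, Nat.find hI = k + 1 := Nat.exists_eq_succ_of_ne_zero fun h0 => by
    rw [h0, pow_zero, Ideal.one_eq_top] at hk
    exact top_ne_bot hk
  have hne : I ^ k ≠ ⊥ := Nat.find_min hI (by omega)
  obtain ⟨s, hs, hs0⟩ := Submodule.exists_mem_ne_zero_of_ne_bot hne
  refine ⟨s, hs0, fun x hx => ?_⟩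
  have : s * x ∈ I ^ (k + 1) := pow_succ I k ▸ Ideal.mul_mem_mul hs hx
  rwa [← hk_eq, hk, Ideal.zero_eq_bot, Ideal.mem_bot] at this

theorem LinearIndependent.residue_comp {R ι κ : Type*} [CommRing R] [IsLocalRing R]
    [IsArtinianRing R] [Fintype ι] {v : ι → κ → R} (hv : LinearIndependent R v) :
    LinearIndependent (ResidueField R) fun i => residue R ∘ v i := by
  obtain ⟨s, hs0, hs⟩ := Ideal.exists_ne_zero_forall_mul_eq_zero_of_isNilpotent
    ((isArtinianRing_iff_isNilpotent_maximalIdeal R).mp ‹_›)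
  rw [Fintype.linearIndependent_iff]
  intro c hc j
  choose d hd using fun i => residue_surjective (c i)
  have hsd : ∀ i, s * d i = 0 := by
    refine Fintype.linearIndependent_iff.mp hv _ (funext fun k => ?_)
    have hk : residue R (∑ i, d i * v i k) = 0 := by
      simpa [hd, Finset.sum_apply] using congrFun hc k
    simpa [Finset.sum_apply, mul_assoc, ← Finset.mul_sum] using
      hs _ ((residue_eq_zero_iff _).mp hk)
  by_contra hcj
  have hdj : IsUnit (d j) := by
    rwa [← residue_ne_zero_iff_isUnit, hd]
  exact hs0 (hdj.mul_left_eq_zero.mp (hsd j))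

theorem Matrix.exists_injective_isUnit_submatrix {K ι κ : Type*} [Field K] [Fintype ι]
    [Fintype κ] [DecidableEq κ] {Z : Matrix ι κ K} (hZ : LinearIndependent K Zᵀ) :
    ∃ g : κ → ι, Function.Injective g ∧ IsUnit (Z.submatrix g id) := by
  have hspan : Submodule.span K (Set.range Z.row) = ⊤ := by
    refine Submodule.eq_top_of_finrank_eq ?_
    rw [← rank_eq_finrank_span_row, ← rank_transpose, LinearIndependent.rank_matrix (M := Zᵀ) hZ,
      Module.finrank_fintype_fun_eq_card]
  obtain ⟨κ', a, ha, ha_span, ha_li⟩ := exists_linearIndependent' K Z.row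
  let b := Module.Basis.mk ha_li (by rw [ha_span, hspan])
  let e : κ' ≃ κ := b.indexEquiv (Pi.basisFun K κ)
  refine ⟨a ∘ e.symm, ha.comp e.symm.injective, linearIndependent_rows_iff_isUnit.mp ?_⟩
  exact ha_li.comp e.symm e.symm.injective

theorem Matrix.isUnit_of_isUnit_map {R S m : Type*} [CommRing R] [CommRing S] [Fintype m]
    [DecidableEq m] (f : R →+* S) [IsLocalHom f] {A : Matrix m m R} (hA : IsUnit (A.map f)) :
    IsUnit A := by
  rw [isUnit_iff_isUnit_det, ← isUnit_map_iff f, RingHom.map_det]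
  exact (isUnit_iff_isUnit_det _).mp hA

theorem Matrix.exists_injective_isUnit_submatrix_of_isArtinianRing {R ι κ : Type*} [CommRing R]
    [IsLocalRing R] [IsArtinianRing R] [Fintype ι] [Fintype κ] [DecidableEq κ]
    {Z : Matrix ι κ R} (hZ : LinearIndependent R Zᵀ) :
    ∃ g : κ → ι, Function.Injective g ∧ IsUnit (Z.submatrix g id) := by
  obtain ⟨g, hg, hA⟩ := exists_injective_isUnit_submatrix (Z := Z.map (residue R)) hZ.residue_comp
  exact ⟨g, hg, isUnit_of_isUnit_map (residue R) hA⟩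

theorem Function.Injective.exists_perm_comp_eq {α β : Type*} [Finite α] {f g : β → α}
    (hf : f.Injective) (hg : g.Injective) : ∃ τ : Equiv.Perm α, τ ∘ f = g := by
  classical
  have := Fintype.ofFinite α
  let e := (Equiv.ofInjective f hf).symm.trans (Equiv.ofInjective g hg)
  refine ⟨e.extendSubtype, funext fun b => ?_⟩
  rw [Function.comp_apply, e.extendSubtype_apply_of_mem _ ⟨b, rfl⟩]
  simp [e]

def Matrix.identityStack {R : Type*} [Zero R] [One R] {n r : ℕ}
    (Z' : Matrix (Fin r) (Fin (n - r)) R) : Matrix (Fin n) (Fin (n - r)) R :=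
  Matrix.of fun i j =>
    if h : (i : ℕ) < n - r then (if (i : ℕ) = (j : ℕ) then 1 else 0)
    else Z' ⟨(i : ℕ) - (n - r), by omega⟩ j

theorem Matrix.identityStack_eq_of_submatrix_castLE_eq_one {R : Type*} [Zero R] [One R]
    {n r : ℕ} (hr : r ≤ n) {B : Matrix (Fin n) (Fin (n - r)) R}
    (hB : B.submatrix (Fin.castLE (n.sub_le r)) id = 1) :
    identityStack (B.submatrix (fun i : Fin r => ⟨n - r + i, by omega⟩) id) = B := by
  ext i j
  by_cases h : (i : ℕ) < n - r
  · have := congrFun₂ hB ⟨i, h⟩ j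
    simp only [submatrix_apply, one_apply, Fin.ext_iff] at this
    simp [identityStack, h, ← this]
  · simp only [identityStack, of_apply, dif_neg h, submatrix_apply, id_eq]
    congr 1
    ext
    dsimp only
    omega

/-- Over a finite commutative chain ring, a matrix `Z ∈ R^{n×(n-r)}` with
linearly independent columns factors as `P * [I_{n-r}; Z'] * Q` with `P` a permutation
matrix, `Q` invertible and `Z' ∈ R^{r×(n-r)}`. -/
theorem stmt8 (R : Type*) [CommRing R] [Fintype R] [IsLocalRing R]
    (n r : ℕ) (hr : r ≤ n) (Z : Matrix (Fin n) (Fin (n - r)) R)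
    (hZ : LinearIndependent R Z.transpose) :
    ∃ (σ : Equiv.Perm (Fin n)) (Q : Matrix (Fin (n - r)) (Fin (n - r)) R)
      (Z' : Matrix (Fin r) (Fin (n - r)) R),
      IsUnit Q ∧
      Z = (σ.permMatrix R) *
          (Matrix.of fun (i : Fin n) (j : Fin (n - r)) =>
            if h : (i : ℕ) < n - r then (if (i : ℕ) = (j : ℕ) then (1 : R) else 0)
            else Z' ⟨(i : ℕ) - (n - r), by omega⟩ j) * Q := by
  have : IsArtinianRing R := isArtinian_of_finite
  obtain ⟨g, hg, hA⟩ := exists_injective_isUnit_submatrix_of_isArtinianRing hZ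
  obtain ⟨τ, hτ⟩ := (Fin.castLE_injective (n.sub_le r)).exists_perm_comp_eq hg
  set A := Z.submatrix g id
  have hAdet : IsUnit A.det := (isUnit_iff_isUnit_det A).mp hA
  set B := Z.submatrix τ id * A⁻¹
  have hB : B.submatrix (Fin.castLE (n.sub_le r)) id = 1 := by
    rw [submatrix_mul _ _ _ id _ Function.bijective_id, submatrix_submatrix, hτ]
    exact mul_nonsing_inv A hAdet
  refine ⟨τ⁻¹, A, B.submatrix (fun i : Fin r => ⟨n - r + i, by omega⟩) id, hA, ?_⟩
  calc Z = (τ⁻¹).permMatrix R * Z.submatrix τ id := by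
        rw [PEquiv.toMatrix_toPEquiv_mul, submatrix_submatrix]; simp
    _ = (τ⁻¹).permMatrix R * B * A := by
        rw [Matrix.mul_assoc, nonsing_inv_mul_cancel_right _ _ hAdet]
    _ = (τ⁻¹).permMatrix R * identityStack (B.submatrix _ id) * A := by
        rw [identityStack_eq_of_submatrix_castLE_eq_one hr hB]
end

section
/- Over the ring Z/6Z, the column vector Z = (2, 3)^T has a Z/6Z-linearly independent column, but there do not exist a 2×2 permutation matrix P, a unit q ∈ Z/6Z, and z' ∈ Z/6Z such that Z = P · (1, z')^T · q. -/
/-- Over `ℤ/6ℤ`, the column vector `(2,3)ᵀ` is linearly independent, yet it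
admits no standard-form decomposition `P * (1, z')ᵀ * q` with `P` a permutation matrix and
`q` a unit. -/
theorem stmt9 :
    (∀ a : ZMod 6, a * 2 = 0 → a * 3 = 0 → a = 0) ∧
    ¬ ∃ (σ : Equiv.Perm (Fin 2)) (q : (ZMod 6)ˣ) (z' : ZMod 6),
        (!![2; 3] : Matrix (Fin 2) (Fin 1) (ZMod 6)) =
          (σ.permMatrix (ZMod 6)) * !![1; z'] * (Matrix.diagonal fun _ => (q : ZMod 6)) := by
  constructor
  · decide
  · decide
end

section
/- Let R be a finite commutative principal ideal ring and let A, B be r×n matrices over R with linearly independent rows such that row(A) = row(B). Then there exists an invertible r×r matrix Q over R with B = Q·A; consequently any r×r minor of B equals the corresponding r×r minor of A multiplied by the unit det(Q), so the Plücker coordinates of row(A) are unique up to a common unit factor. -/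
/-!
The rows of each matrix lie in the row span of the other, so `B = Q * A` and `A = P * B`.
Then `Q * P * B = B`, and since the rows of `B` are linearly independent, right multiplication
by `B` is injective, forcing `Q * P = 1`. The minors of `B = Q * A` are then `det Q` times those
of `A` by multiplicativity of the determinant.
-/

namespace Matrix

variable {l m n R : Type*} [CommSemiring R] [Fintype m]

theorem exists_mul_eq_of_span_range_le {M : Matrix m n R} {N : Matrix l n R}
    (h : Submodule.span R (Set.range N) ≤ Submodule.span R (Set.range M)) :
    ∃ P : Matrix l m R, N = P * M := by
  have hrow (i : l) : N i ∈ LinearMap.range M.vecMulLinear := by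
    rw [range_vecMulLinear]
    exact h (Submodule.subset_span ⟨i, rfl⟩)
  choose P hP using hrow
  exact ⟨P, funext fun i => (hP i).symm⟩

theorem mul_left_injective_of_linearIndependent {B : Matrix m n R}
    (hB : LinearIndependent R B) : Function.Injective fun C : Matrix l m R => C * B :=
  fun _ _ h => funext fun i => vecMul_injective_iff.mpr hB (congrFun h i)

end Matrix

theorem stmt12_general (R : Type*) [CommRing R]
    (r n : ℕ) (A B : Matrix (Fin r) (Fin n) R)
    (hB : LinearIndependent R B)
    (hAB : Submodule.span R (Set.range A) = Submodule.span R (Set.range B)) :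
    ∃ Q : Matrix (Fin r) (Fin r) R, IsUnit Q ∧ B = Q * A ∧ IsUnit Q.det ∧
      ∀ g : Fin r → Fin n, StrictMono g →
        (B.submatrix id g).det = Q.det * (A.submatrix id g).det := by
  obtain ⟨Q, hQ⟩ := Matrix.exists_mul_eq_of_span_range_le hAB.ge
  obtain ⟨P, hP⟩ := Matrix.exists_mul_eq_of_span_range_le hAB.le
  have hQP : Q * P = 1 := Matrix.mul_left_injective_of_linearIndependent hB <| by
    simp only [Matrix.mul_assoc, ← hP, ← hQ, Matrix.one_mul]
  have hQdet : IsUnit Q.det := Matrix.isUnit_det_of_right_inverse hQP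
  refine ⟨Q, (Matrix.isUnit_iff_isUnit_det Q).mpr hQdet, hQ, hQdet, fun g _ => ?_⟩
  rw [hQ, Matrix.submatrix_mul Q A id id g Function.bijective_id, Matrix.submatrix_id_id,
    Matrix.det_mul]

/-- Over a finite commutative principal ideal ring, two matrices with linearly
independent rows and the same row span differ by an invertible matrix `Q`; hence their
`r×r` minors (Plücker coordinates) agree up to the unit factor `det Q`. -/
theorem stmt12 (R : Type*) [CommRing R] [Fintype R] [IsPrincipalIdealRing R]
    (r n : ℕ) (A B : Matrix (Fin r) (Fin n) R)
    (hA : LinearIndependent R A) (hB : LinearIndependent R B)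
    (hAB : Submodule.span R (Set.range A) = Submodule.span R (Set.range B)) :
    ∃ Q : Matrix (Fin r) (Fin r) R, IsUnit Q ∧ B = Q * A ∧ IsUnit Q.det ∧
      ∀ g : Fin r → Fin n, StrictMono g →
        (B.submatrix id g).det = Q.det * (A.submatrix id g).det :=
  stmt12_general R r n A B hB hAB
end
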